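/- arXiv:1106.2120 — 3 statements merged into one kernel-verified Lean document; each statement's English description precedes it below -/
import Mathlib

section
/- The function w ↦ (tan(w/2))^{1/2} (principal branch of the square root) tends to exp(−iπ/4) as Im(w) → −∞, uniformly in Re(w); precisely, it tends to exp(−iπ/4) along the filter comap Im atBot. Consequently the opposite branch −(tan(w/2))^{1/2} tends to −exp(−iπ/4). -/
/-!
With `u = exp (-2 i z)` one has `tan z = (1 - u) / (i (1 + u))`, and `‖u‖ = exp (2 Im z)` tends to `0`
as `Im z → -∞`, uniformly in `Re z`. Hence `tan (w / 2) → -i`; as `-i` lies in the slit plane, the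
principal square root is continuous there, and `(-i) ^ (1 / 2) = exp (-iπ/4)`.
-/

open Filter Topology

namespace Complex

/-- Valid for every `z`: where `cos z = 0` both sides take the junk value `0`. -/
theorem tan_eq_one_sub_exp_div (z : ℂ) :
    tan z = (1 - exp (-2 * I * z)) / (I * (1 + exp (-2 * I * z))) := by
  have hexp : exp (z * I) * exp (-2 * I * z) = exp (-z * I) := by
    rw [← exp_add]; ring_nf
  have hsin : sin z = exp (z * I) / 2 * ((1 - exp (-2 * I * z)) * -I) := by
    rw [sin]
    linear_combination (-I / 2) * hexp
  have hcos : cos z = exp (z * I) / 2 * (1 + exp (-2 * I * z)) := by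
    rw [cos]
    linear_combination (-1 / 2 : ℂ) * hexp
  rw [tan_eq_sin_div_cos, hsin, hcos, mul_div_mul_left _ _ (by simp), mul_div_right_comm,
    mul_comm I, ← div_div, div_I, mul_neg]

theorem tendsto_tan_comap_im_atBot : Tendsto tan (comap im atBot) (𝓝 (-I)) := by
  have hu : Tendsto (fun z : ℂ => exp (-2 * I * z)) (comap im atBot) (𝓝 0) := by
    refine tendsto_exp_comap_re_atBot.comp (tendsto_comap_iff.mpr ?_)
    simpa [Function.comp_def] using (tendsto_comap (f := im) (x := atBot)).const_mul_atBot two_pos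
  have hlim : Tendsto (fun u : ℂ => (1 - u) / (I * (1 + u))) (𝓝 0) (𝓝 (-I)) := by
    have hcont : ContinuousAt (fun u : ℂ => (1 - u) / (I * (1 + u))) 0 :=
      ContinuousAt.div (by fun_prop) (by fun_prop) (by simp)
    simpa using hcont.tendsto
  simpa only [Function.comp_def, ← tan_eq_one_sub_exp_div] using hlim.comp hu

theorem tendsto_div_two_comap_im_atBot :
    Tendsto (fun w : ℂ => w / 2) (comap im atBot) (comap im atBot) := by
  refine tendsto_comap_iff.mpr ?_
  simpa [Function.comp_def] using (tendsto_comap (f := im) (x := atBot)).atBot_div_const two_pos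

theorem neg_I_cpow_one_half : (-I) ^ ((1 : ℂ) / 2) = exp (-(Real.pi / 4 : ℝ) * I) := by
  rw [cpow_def_of_ne_zero (neg_ne_zero.mpr I_ne_zero), log_neg_I]
  push_cast
  ring_nf

end Complex

open Complex in
/-- `w ↦ (tan (w/2))^(1/2)` (principal square root) tends to `exp(−iπ/4)` as
`Im w → −∞` (along `comap Im atBot`); consequently the opposite branch
`−(tan (w/2))^(1/2)` tends to `−exp(−iπ/4)`. -/
theorem sqrt_tan_half_tendsto_atBot_im :
    Filter.Tendsto (fun w : ℂ => Complex.tan (w / 2) ^ ((1 : ℂ) / 2))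
      (Filter.comap Complex.im Filter.atBot)
      (nhds (Complex.exp (-(Real.pi / 4 : ℝ) * Complex.I))) ∧
    Filter.Tendsto (fun w : ℂ => -(Complex.tan (w / 2) ^ ((1 : ℂ) / 2)))
      (Filter.comap Complex.im Filter.atBot)
      (nhds (-Complex.exp (-(Real.pi / 4 : ℝ) * Complex.I))) := by
  have hsqrt : ContinuousAt (fun z : ℂ => z ^ ((1 : ℂ) / 2)) (-I) :=
    continuousAt_cpow_const (by simp [mem_slitPlane_iff])
  have hlim := (neg_I_cpow_one_half ▸ hsqrt.tendsto).comp
    (tendsto_tan_comap_im_atBot.comp tendsto_div_two_comap_im_atBot)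
  exact ⟨hlim, hlim.neg⟩
end

section
/- Let z : [−π,π] → ℝ² and ω : [−π,π] → ℝ be continuous, and define, for x in the open set ℝ² \ z([−π,π]), the vector field v(x) = (1/2π) ∫_{−π}^{π} (x − z(α))^⊥ / |x − z(α)|² · ω(α) dα, where (a₁,a₂)^⊥ = (−a₂, a₁). Then v is continuously differentiable on ℝ² \ z([−π,π]) and satisfies there both ∂_{x₁} v₁ + ∂_{x₂} v₂ = 0 (divergence-free) and ∂_{x₁} v₂ − ∂_{x₂} v₁ = 0 (irrotational). -/
/-! Identify `ℝ²` with `ℂ` and the curve `z` with `ζ : ℝ → ℂ`. The Biot–Savart integrand is the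
complex conjugate of `ω(α) / (2πi (w - ζ(α)))`, so `v` is the conjugate of the Cauchy-type integral
`W(w) = (2πi)⁻¹ ∫ ω(α) / (w - ζ(α)) dα`, which is holomorphic off the curve: differentiate under the
integral sign, the derivative of the integrand being uniformly bounded near any point off the
compact curve. A planar field whose complex velocity `v₁ - i v₂` is holomorphic is smooth, and the
Cauchy–Riemann equations for it say exactly that the field is divergence-free and irrotational. -/

open scoped Real

/-- Partial derivative in the first variable of `f : ℝ × ℝ → ℝ`. -/
noncomputable def pfst (f : ℝ × ℝ → ℝ) (x : ℝ × ℝ) : ℝ := deriv (fun s => f (s, x.2)) x.1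

/-- Partial derivative in the second variable of `f : ℝ × ℝ → ℝ`. -/
noncomputable def psnd (f : ℝ × ℝ → ℝ) (x : ℝ × ℝ) : ℝ := deriv (fun s => f (x.1, s)) x.2

open Complex Metric Set Filter Topology intervalIntegral
open scoped ComplexConjugate

theorem HasFDerivAt.pfst_eq {f : ℝ × ℝ → ℝ} {f' : ℝ × ℝ →L[ℝ] ℝ} {x : ℝ × ℝ}
    (hf : HasFDerivAt f f' x) : pfst f x = f' (1, 0) :=
  (hf.comp_hasDerivAt x.1 ((hasDerivAt_id x.1).prodMk (hasDerivAt_const x.1 x.2))).deriv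

theorem HasFDerivAt.psnd_eq {f : ℝ × ℝ → ℝ} {f' : ℝ × ℝ →L[ℝ] ℝ} {x : ℝ × ℝ}
    (hf : HasFDerivAt f f' x) : psnd f x = f' (0, 1) :=
  (hf.comp_hasDerivAt x.2 ((hasDerivAt_const x.2 x.1).prodMk (hasDerivAt_id x.2))).deriv

/-- The planar velocity field `(u, v)` whose complex velocity `u - i v` is `F`. -/
noncomputable def velocityOfComplexVelocity (F : ℂ → ℂ) (y : ℝ × ℝ) : ℝ × ℝ :=
  equivRealProdCLM (conj (F (equivRealProdCLM.symm y)))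

theorem hasFDerivAt_velocityOfComplexVelocity {F : ℂ → ℂ} {c : ℂ} {x : ℝ × ℝ}
    (hF : HasDerivAt F c (equivRealProdCLM.symm x)) :
    HasFDerivAt (velocityOfComplexVelocity F)
      ((equivRealProdCLM : ℂ →L[ℝ] ℝ × ℝ) ∘L (conjCLE : ℂ →L[ℝ] ℂ) ∘L
        (ContinuousLinearMap.toSpanSingleton ℂ c).restrictScalars ℝ ∘L
        (equivRealProdCLM.symm : ℝ × ℝ →L[ℝ] ℂ)) x := by
  have hF' := hF.hasFDerivAt.restrictScalars ℝ
  exact equivRealProdCLM.hasFDerivAt.comp x (conjCLE.hasFDerivAt.comp x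
    (hF'.comp x equivRealProdCLM.symm.hasFDerivAt))

theorem contDiffOn_velocityOfComplexVelocity {F : ℂ → ℂ} {U : Set ℂ} (hU : IsOpen U)
    (hF : DifferentiableOn ℂ F U) {n : WithTop ℕ∞} :
    ContDiffOn ℝ n (velocityOfComplexVelocity F) (equivRealProdCLM.symm ⁻¹' U) :=
  equivRealProdCLM.contDiff.comp_contDiffOn <| conjCLE.contDiff.comp_contDiffOn <|
    ((hF.contDiffOn hU).restrict_scalars ℝ).comp equivRealProdCLM.symm.contDiff.contDiffOn
      fun _ hy => hy

theorem div_curl_eq_zero_of_eventuallyEq_velocityOfComplexVelocity {v : ℝ × ℝ → ℝ × ℝ}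
    {F : ℂ → ℂ} {x : ℝ × ℝ} (hv : v =ᶠ[𝓝 x] velocityOfComplexVelocity F)
    (hF : DifferentiableAt ℂ F (equivRealProdCLM.symm x)) :
    pfst (fun y => (v y).1) x + psnd (fun y => (v y).2) x = 0 ∧
      pfst (fun y => (v y).2) x - psnd (fun y => (v y).1) x = 0 := by
  -- The derivative of `v` at `x` is `h ↦ conj (c h)`, with matrix `[[a, -b], [-b, -a]]` for
  -- `c = a + b i`: trace zero and symmetric.
  have hv' := (hasFDerivAt_velocityOfComplexVelocity hF.hasDerivAt).congr_of_eventuallyEq hv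
  rw [hv'.fst.pfst_eq, hv'.fst.psnd_eq, hv'.snd.pfst_eq, hv'.snd.psnd_eq]
  simp

theorem exists_pos_forall_le_dist_of_notMem {X : Type*} [PseudoMetricSpace X] {K : Set X}
    {w : X} (hK : IsClosed K) (hw : w ∉ K) :
    ∃ ε > 0, ∀ u ∈ ball w ε, ∀ k ∈ K, ε ≤ dist u k := by
  obtain ⟨r, hr, hball⟩ := Metric.isOpen_iff.1 hK.isOpen_compl w hw
  refine ⟨r / 2, half_pos hr, fun u hu k hk => ?_⟩
  have hwk : r ≤ dist w k := not_lt.1 fun h => hball (mem_ball'.2 h) hk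
  linarith [dist_triangle w u k, mem_ball'.1 hu]

theorem differentiableAt_intervalIntegral_div_sub {a b : ℝ} {f ζ : ℝ → ℂ}
    (hf : ContinuousOn f (uIcc a b)) (hζ : ContinuousOn ζ (uIcc a b)) {w : ℂ}
    (hw : w ∉ ζ '' uIcc a b) :
    DifferentiableAt ℂ (fun w => ∫ α in a..b, f α / (w - ζ α)) w := by
  obtain ⟨ε, hε, hε_dist⟩ := exists_pos_forall_le_dist_of_notMem
    (isCompact_uIcc.image_of_continuousOn hζ).isClosed hw
  have hε_norm : ∀ u ∈ ball w ε, ∀ α ∈ uIcc a b, ε ≤ ‖u - ζ α‖ := fun u hu α hα =>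
    dist_eq_norm u (ζ α) ▸ hε_dist u hu _ (mem_image_of_mem ζ hα)
  have hne : ∀ u ∈ ball w ε, ∀ α ∈ uIcc a b, u - ζ α ≠ 0 := fun u hu α hα h0 => by
    linarith [hε_norm u hu α hα, h0 ▸ norm_zero (E := ℂ)]
  obtain ⟨C, hC⟩ := isCompact_uIcc.exists_bound_of_continuousOn hf
  have hbound : ∀ u ∈ ball w ε, ∀ α ∈ uIcc a b, ‖-f α / (u - ζ α) ^ 2‖ ≤ C / ε ^ 2 :=
    fun u hu α hα => by
      rw [norm_div, norm_neg, norm_pow]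
      exact div_le_div₀ ((norm_nonneg _).trans (hC α hα)) (hC α hα) (by positivity)
        (pow_le_pow_left₀ hε.le (hε_norm u hu α hα) 2)
  have hcont : ∀ u ∈ ball w ε, ContinuousOn (fun α => f α / (u - ζ α)) (uIcc a b) :=
    fun u hu => hf.div (continuousOn_const.sub hζ) (hne u hu)
  have hcont' : ContinuousOn (fun α => -f α / (w - ζ α) ^ 2) (uIcc a b) :=
    hf.neg.div ((continuousOn_const.sub hζ).pow 2)
      fun α hα => pow_ne_zero 2 (hne w (mem_ball_self hε) α hα)
  refine (hasDerivAt_integral_of_dominated_loc_of_deriv_le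
    (F' := fun u α => -f α / (u - ζ α) ^ 2) (bound := fun _ => C / ε ^ 2)
    (ball_mem_nhds w hε) ?_ ?_ ?_ ?_ intervalIntegrable_const ?_).2.differentiableAt
  · filter_upwards [ball_mem_nhds w hε] with u hu
    exact ((hcont u hu).mono uIoc_subset_uIcc).aestronglyMeasurable measurableSet_uIoc
  · exact (hcont w (mem_ball_self hε)).intervalIntegrable
  · exact (hcont'.mono uIoc_subset_uIcc).aestronglyMeasurable measurableSet_uIoc
  · exact Eventually.of_forall fun α hα u hu => hbound u hu α (uIoc_subset_uIcc hα)
  · refine Eventually.of_forall fun α hα u hu => ?_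
    simpa [neg_div] using (hasDerivAt_const u (f α)).fun_div
      ((hasDerivAt_id u).sub_const (ζ α)) (hne u hu α (uIoc_subset_uIcc hα))

noncomputable def vortexSheetComplexVelocity (a b : ℝ) (ζ : ℝ → ℂ) (ω : ℝ → ℝ) (w : ℂ) : ℂ :=
  (2 * π * I)⁻¹ * ∫ α in a..b, ω α / (w - ζ α)

theorem differentiableOn_vortexSheetComplexVelocity {a b : ℝ} {ζ : ℝ → ℂ} {ω : ℝ → ℝ}
    (hζ : ContinuousOn ζ (uIcc a b)) (hω : ContinuousOn ω (uIcc a b)) :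
    DifferentiableOn ℂ (vortexSheetComplexVelocity a b ζ ω) (ζ '' uIcc a b)ᶜ := fun _ hw =>
  ((differentiableAt_intervalIntegral_div_sub (continuous_ofReal.comp_continuousOn hω) hζ
    hw).const_mul _).differentiableWithinAt

/-- At `p = 0` both sides are `0`, through the junk value `t / 0 = 0`. -/
theorem biotSavart_kernel_eq (t : ℝ) (p : ℝ × ℝ) :
    (1 / (2 * π)) • ((t / (p.1 ^ 2 + p.2 ^ 2)) • ((-p.2, p.1) : ℝ × ℝ)) =
      equivRealProdCLM (conj ((2 * π * I)⁻¹ * (t / equivRealProdCLM.symm p))) := by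
  ext <;> simp [div_re, div_im, normSq_apply] <;> field_simp

theorem ContinuousLinearEquiv.intervalIntegral_comp_comm {E F : Type*}
    [NormedAddCommGroup E] [NormedSpace ℝ E] [NormedAddCommGroup F] [NormedSpace ℝ F]
    (L : E ≃L[ℝ] F) (f : ℝ → E) (a b : ℝ) :
    ∫ t in a..b, L (f t) = L (∫ t in a..b, f t) := by
  simp only [intervalIntegral, L.integral_comp_comm, map_sub]

theorem biotSavart_eq_velocityOfComplexVelocity (a b : ℝ) (z : ℝ → ℝ × ℝ) (ω : ℝ → ℝ)
    (x : ℝ × ℝ) :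
    (1 / (2 * π)) • ∫ α in a..b,
        (ω α / ((x.1 - (z α).1) ^ 2 + (x.2 - (z α).2) ^ 2))
          • ((-(x.2 - (z α).2), x.1 - (z α).1) : ℝ × ℝ) =
      velocityOfComplexVelocity
        (vortexSheetComplexVelocity a b (equivRealProdCLM.symm ∘ z) ω) x := by
  let K : ℂ ≃L[ℝ] ℝ × ℝ := conjCLE.trans equivRealProdCLM
  calc _ = ∫ α in a..b, K ((2 * π * I)⁻¹ *
        (ω α / (equivRealProdCLM.symm x - equivRealProdCLM.symm (z α)))) := by
        rw [← integral_smul]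
        refine integral_congr fun α _ => ?_
        rw [← map_sub]
        exact biotSavart_kernel_eq (ω α) (x - z α)
    _ = _ := by
      rw [K.intervalIntegral_comp_comm, integral_const_mul]
      rfl

/-- the velocity field
`v(x) = (1/2π) ∫_{−π}^{π} (x − z(α))^⊥/|x − z(α)|² ω(α) dα` produced by a vortex sheet of
continuous amplitude `ω` on a continuous curve `z` is `C¹` away from the curve, and it is
divergence-free and irrotational there. -/
theorem biot_savart_velocity_div_curl_free
    (z : ℝ → ℝ × ℝ) (ω : ℝ → ℝ)
    (hz : ContinuousOn z (Set.Icc (-π) π)) (hω : ContinuousOn ω (Set.Icc (-π) π))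
    (v : ℝ × ℝ → ℝ × ℝ)
    (hv : ∀ x : ℝ × ℝ, x ∉ z '' Set.Icc (-π) π →
      v x = (1 / (2 * π)) • ∫ α in (-π)..π,
        (ω α / ((x.1 - (z α).1) ^ 2 + (x.2 - (z α).2) ^ 2))
          • ((-(x.2 - (z α).2), x.1 - (z α).1) : ℝ × ℝ)) :
    ContDiffOn ℝ 1 v ((z '' Set.Icc (-π) π)ᶜ) ∧
      ∀ x : ℝ × ℝ, x ∉ z '' Set.Icc (-π) π →
        pfst (fun y => (v y).1) x + psnd (fun y => (v y).2) x = 0 ∧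
        pfst (fun y => (v y).2) x - psnd (fun y => (v y).1) x = 0 := by
  rw [← uIcc_of_le (neg_le_self Real.pi_pos.le)] at hz hω hv ⊢
  set e : (ℝ × ℝ) ≃L[ℝ] ℂ := equivRealProdCLM.symm
  set S := z '' uIcc (-π) π
  have hζ : ContinuousOn (e ∘ z) (uIcc (-π) π) := e.continuous.comp_continuousOn hz
  have hS : IsClosed S := (isCompact_uIcc.image_of_continuousOn hz).isClosed
  have hU : IsOpen ((e ∘ z) '' uIcc (-π) π)ᶜ :=
    (isCompact_uIcc.image_of_continuousOn hζ).isClosed.isOpen_compl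
  have hUS : e ⁻¹' ((e ∘ z) '' uIcc (-π) π)ᶜ = Sᶜ := by
    rw [image_comp, preimage_compl, e.injective.preimage_image]
  have hW := differentiableOn_vortexSheetComplexVelocity hζ hω
  have hv' :
      EqOn v (velocityOfComplexVelocity (vortexSheetComplexVelocity (-π) π (e ∘ z) ω)) Sᶜ :=
    fun x hx => (hv x hx).trans (biotSavart_eq_velocityOfComplexVelocity _ _ z ω x)
  refine ⟨hUS ▸ (contDiffOn_velocityOfComplexVelocity hU hW).congr (hUS ▸ hv'), fun x hx => ?_⟩
  exact div_curl_eq_zero_of_eventuallyEq_velocityOfComplexVelocity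
    (hv'.eventuallyEq_of_mem (hS.isOpen_compl.mem_nhds hx))
    (hW.differentiableAt (hU.mem_nhds (hUS.ge hx)))
end

section
/- Let V ⊆ ℂ be open, φ : V → ℂ holomorphic on V, and z₀ ∈ V. Let p̃ : ℂ → ℝ be (real-Fréchet) differentiable at φ(z₀) and set p = p̃ ∘ φ. Let c : ℝ → ℂ be differentiable at α₀ with c(α₀) = z₀. Then, identifying ℂ with ℝ² and writing u^⊥ = i·u for the counterclockwise rotation by π/2, the Rayleigh–Taylor quantity is conformally invariant: ⟨∇p(z₀), (c′(α₀))^⊥⟩ = ⟨∇p̃(φ(z₀)), ((φ∘c)′(α₀))^⊥⟩, where ∇ denotes the gradient of a real-valued function on ℝ² ≅ ℂ and ⟨·,·⟩ the Euclidean inner product. -/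
/-!
A holomorphic map has a ℂ-linear real differential, and ℂ-linearity includes commuting with
the rotation `u ↦ I * u`. Hence, by the chain rule, testing `∇(p̃ ∘ φ)` against the rotated
tangent `I * c′` is the same as testing `∇p̃` against `I * dφ(c′) = I * (φ ∘ c)′`.
-/

open scoped RealInnerProductSpace

theorem DifferentiableAt.fderiv_restrictScalars_apply_smul {𝕜 𝕜' E F : Type*}
    [NontriviallyNormedField 𝕜] [NontriviallyNormedField 𝕜'] [NormedAlgebra 𝕜 𝕜']
    [NormedAddCommGroup E] [NormedSpace 𝕜 E] [NormedSpace 𝕜' E] [IsScalarTower 𝕜 𝕜' E]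
    [NormedAddCommGroup F] [NormedSpace 𝕜 F] [NormedSpace 𝕜' F] [IsScalarTower 𝕜 𝕜' F]
    {f : E → F} {x : E} (hf : DifferentiableAt 𝕜' f x) (a : 𝕜') (v : E) :
    fderiv 𝕜 f x (a • v) = a • fderiv 𝕜 f x v := by
  rw [hf.fderiv_restrictScalars 𝕜]
  exact map_smul (fderiv 𝕜' f x) a v

theorem inner_gradient_comp_I_mul {g : ℂ → ℝ} {φ : ℂ → ℂ} {z : ℂ}
    (hg : DifferentiableAt ℝ g (φ z)) (hφ : DifferentiableAt ℂ φ z) (v : ℂ) :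
    ⟪gradient (g ∘ φ) z, Complex.I * v⟫
      = ⟪gradient g (φ z), Complex.I * fderiv ℝ φ z v⟫ := by
  have hφℝ : DifferentiableAt ℝ φ z := hφ.restrictScalars ℝ
  rw [inner_gradient_left, inner_gradient_left, fderiv_comp z hg hφℝ,
    ContinuousLinearMap.comp_apply]
  congr 1
  exact hφ.fderiv_restrictScalars_apply_smul Complex.I v

/-- conformal invariance of the Rayleigh–Taylor quantity: let `V ⊆ ℂ` be
open, `φ` holomorphic on `V`, `z₀ ∈ V`, `p̃ : ℂ → ℝ` real-differentiable at `φ z₀`,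
`p = p̃ ∘ φ`, and `c : ℝ → ℂ` differentiable at `α₀` with `c α₀ = z₀`. Identifying `ℂ ≅ ℝ²`
and writing `u^⊥ = i·u`, one has
`⟨∇p(z₀), (c′(α₀))^⊥⟩ = ⟨∇p̃(φ z₀), ((φ∘c)′(α₀))^⊥⟩`. -/
theorem rayleigh_taylor_conformal_invariance
    (V : Set ℂ) (hV : IsOpen V) (φ : ℂ → ℂ) (hφ : DifferentiableOn ℂ φ V)
    (z₀ : ℂ) (hz₀ : z₀ ∈ V)
    (ptld : ℂ → ℝ) (hptld : DifferentiableAt ℝ ptld (φ z₀))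
    (p : ℂ → ℝ) (hp : p = ptld ∘ φ)
    (c : ℝ → ℂ) (α₀ : ℝ) (hc : DifferentiableAt ℝ c α₀) (hcz : c α₀ = z₀) :
    ⟪gradient p z₀, Complex.I * deriv c α₀⟫
      = ⟪gradient ptld (φ z₀), Complex.I * deriv (φ ∘ c) α₀⟫ := by
  have hφz₀ : DifferentiableAt ℂ φ z₀ := hφ.differentiableAt (hV.mem_nhds hz₀)
  subst hp hcz
  rw [inner_gradient_comp_I_mul hptld hφz₀,
    fderiv_comp_deriv α₀ (hφz₀.restrictScalars ℝ) hc]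
end
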